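/- arXiv:2009.08846 — 5 statements merged into one kernel-verified Lean document; each statement's English description precedes it below -/
import Mathlib

section
/- Let d ≥ 1, let g: ℕ → ℕ be an increasing function, let K₀ ≥ 0 be an integer, and suppose 0 < δ < 2^{-(d+1)}. Then for any odd prime p and any set X ⊆ F_p^d there exist an integer l ∈ {0,1,...,d} and a subset Y ⊆ X with |Y| ≥ (1 - 2^{d+1}δ)|X| such that Y is (K, g(K), δ)-tubular, where K = g^l(K₀) (the l-fold iterate of g applied to K₀, with g^0(K₀) = K₀). -/
/-!
Run a greedy procedure on a state `(Y, ψ, l)` in which the first `l` coordinates of `ψY` lie in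
`[-K, K]` with `K = g^l(K₀)`. If `ψY` is `(g(K), δ)`-thick along every linear function that is not
constant on `{0} × 𝔽_p^{d-l}`, then `Y` is tubular. Otherwise some such `ξ` takes values in
`[-g(K), g(K)]` on all but `δ|Y|` points of `ψY`; keep those points and change coordinates so
that `ξ` becomes coordinate `l`. Each step loses at most `δ|X|` points and increases `l`, and at
`l = d` the thickness condition is vacuous, so at most `dδ|X| ≤ 2^{d+1}δ|X|` points are lost.
-/

open Finset

/-- The interval `[-K, K] = {-K, ..., K}` regarded as a subset of `ZMod p`. -/
noncomputable def interval (p K : ℕ) : Finset (ZMod p) :=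
  (Finset.Icc (-(K : ℤ)) (K : ℤ)).image (fun k : ℤ => (k : ZMod p))

/-- The linear function `x ↦ a₀ + ∑ i, a i * x i` on `(ZMod p)^d`. -/
def linMap (p d : ℕ) (a₀ : ZMod p) (a : Fin d → ZMod p) (x : Fin d → ZMod p) : ZMod p :=
  a₀ + ∑ i, a i * x i

/-- A function is constant on a set. -/
def ConstOn {p d : ℕ} (f : (Fin d → ZMod p) → ZMod p) (S : Set (Fin d → ZMod p)) : Prop :=
  ∀ x ∈ S, ∀ y ∈ S, f x = f y

/-- A finite set `X ⊆ (ZMod p)^d` is `(K, δ)`-thick along the linear function `x ↦ a₀ + ∑ aᵢxᵢ`: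
at least `δ|X|` of its elements lie outside `H(ξ, K)`. -/
def IsThickAlong {p d : ℕ} (X : Finset (Fin d → ZMod p)) (a₀ : ZMod p)
    (a : Fin d → ZMod p) (K : ℕ) (δ : ℝ) : Prop :=
  δ * (X.card : ℝ) ≤ ((X.filter (fun x => linMap p d a₀ a x ∉ interval p K)).card : ℝ)

/-- Multiset version of `IsThickAlong`, cardinalities counted with multiplicity.  -/
def IsThickAlongM {p d : ℕ} (A : Multiset (Fin d → ZMod p)) (a₀ : ZMod p)
    (a : Fin d → ZMod p) (K : ℕ) (δ : ℝ) : Prop :=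
  δ * (Multiset.card A : ℝ) ≤
    (Multiset.card (A.filter (fun x => linMap p d a₀ a x ∉ interval p K)) : ℝ)

/-- A finite set is `(K, δ)`-thick in its affine hull: it is `(K, δ)`-thick along every
linear function which is not constant on the affine hull of `X`. -/
def IsThickInHull {p d : ℕ} (X : Finset (Fin d → ZMod p)) (K : ℕ) (δ : ℝ) : Prop :=
  ∀ (a₀ : ZMod p) (a : Fin d → ZMod p),
    ¬ ConstOn (linMap p d a₀ a)
        ((affineSpan (ZMod p) (X : Set (Fin d → ZMod p)) : AffineSubspace (ZMod p) (Fin d → ZMod p)) : Set (Fin d → ZMod p)) →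
    IsThickAlong X a₀ a K δ

/-- Multiset version of `IsThickInHull` (the affine hull of the support). -/
def IsThickInHullM {p d : ℕ} (X : Multiset (Fin d → ZMod p)) (K : ℕ) (δ : ℝ) : Prop :=
  ∀ (a₀ : ZMod p) (a : Fin d → ZMod p),
    ¬ ConstOn (linMap p d a₀ a)
        ((affineSpan (ZMod p) (↑X.toFinset : Set (Fin d → ZMod p)) : AffineSubspace (ZMod p) (Fin d → ZMod p)) : Set (Fin d → ZMod p)) →
    IsThickAlongM X a₀ a K δ

/-- A set `X ⊆ (ZMod p)^d` is `(K, K', δ)`-tubular: there are `l ∈ {0,…,d}` and an affine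
isomorphism `ψ` such that `ψX ⊆ [-K,K]^l × (ZMod p)^{d-l}` and `ψX` is `(K', δ)`-thick along
every linear function which is not constant on `{0} × (ZMod p)^{d-l}`. -/
def IsTubular {p d : ℕ} (X : Finset (Fin d → ZMod p)) (K K' : ℕ) (δ : ℝ) : Prop :=
  ∃ l ≤ d, ∃ ψ : (Fin d → ZMod p) ≃ᵃ[ZMod p] (Fin d → ZMod p),
    (∀ x ∈ X, ∀ i : Fin d, (i : ℕ) < l → ψ x i ∈ interval p K) ∧
    ∀ (a₀ : ZMod p) (a : Fin d → ZMod p),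
      ¬ ConstOn (linMap p d a₀ a) {x : Fin d → ZMod p | ∀ i : Fin d, (i : ℕ) < l → x i = 0} →
      IsThickAlong (X.image (fun x => ψ x)) a₀ a K' δ

lemma interval_mono (p : ℕ) {K K' : ℕ} (h : K ≤ K') : interval p K ⊆ interval p K' :=
  image_subset_image (Icc_subset_Icc (by simp [h]) (by exact_mod_cast h))

section CoordinateChange

variable {F : Type*} [Field F] {d : ℕ}

def swapReplaceCoord (L j : Fin d) (a : Fin d → F) : (Fin d → F) →ₗ[F] (Fin d → F) where
  toFun y i := if i = L then ∑ k, a k * y k else y (Equiv.swap L j i)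
  map_add' x y := by
    ext i
    by_cases h : i = L <;> simp [h, mul_add, sum_add_distrib]
  map_smul' c x := by
    ext i
    by_cases h : i = L <;> simp [h, mul_sum, mul_left_comm]

lemma swapReplaceCoord_injective {L j : Fin d} {a : Fin d → F} (hj : a j ≠ 0) :
    Function.Injective (swapReplaceCoord L j a) := by
  rw [← LinearMap.ker_eq_bot, LinearMap.ker_eq_bot']
  intro y hy
  have hoff : ∀ k, k ≠ j → y k = 0 := by
    intro k hk
    have hkL : Equiv.swap L j k ≠ L := by
      rwa [Ne, Equiv.swap_apply_eq_iff, Equiv.swap_apply_left]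
    simpa [swapReplaceCoord, hkL] using congr_fun hy (Equiv.swap L j k)
  have hsum : ∑ k, a k * y k = 0 := by simpa [swapReplaceCoord] using congr_fun hy L
  rw [sum_eq_single j (fun k _ hk => by rw [hoff k hk, mul_zero]) (by simp)] at hsum
  have hyj : y j = 0 := (mul_eq_zero.mp hsum).resolve_left hj
  ext k
  by_cases hk : k = j
  · rw [hk, hyj, Pi.zero_apply]
  · exact hoff k hk

lemma exists_affineEquiv_apply_eq_linear {l : ℕ} (hl : l < d) (a₀ : F) (a : Fin d → F)
    {j : Fin d} (hlj : l ≤ j) (hj : a j ≠ 0) :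
    ∃ φ : (Fin d → F) ≃ᵃ[F] (Fin d → F),
      (∀ y, φ y ⟨l, hl⟩ = a₀ + ∑ k, a k * y k) ∧ ∀ y (i : Fin d), (i : ℕ) < l → φ y i = y i := by
  set L : Fin d := ⟨l, hl⟩
  let T := LinearEquiv.ofInjectiveEndo _ (swapReplaceCoord_injective (L := L) hj)
  refine ⟨T.toAffineEquiv.trans (AffineEquiv.constVAdd F _ (Pi.single L a₀)),
    fun y => ?_, fun y i hi => ?_⟩
  · simp [T, swapReplaceCoord]
  · have hiL : i ≠ L := fun h => by simp [h, L] at hi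
    have hij : i ≠ j := fun h => by omega
    simp [T, swapReplaceCoord, hiL, Equiv.swap_apply_of_ne_of_ne hiL hij]

end CoordinateChange

variable {p d : ℕ}

/-- The coordinate subspace `{0} × 𝔽_p^{d-l}`. -/
def tailSubspace (l : ℕ) : Set (Fin d → ZMod p) :=
  {x | ∀ i : Fin d, (i : ℕ) < l → x i = 0}

lemma constOn_tailSubspace_of_le {l : ℕ} (hdl : d ≤ l) (f : (Fin d → ZMod p) → ZMod p) :
    ConstOn f (tailSubspace l) := by
  intro x hx y hy
  congr 1
  ext i
  rw [hx i (by omega), hy i (by omega)]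

lemma exists_coeff_ne_zero_of_not_constOn {l : ℕ} {a₀ : ZMod p} {a : Fin d → ZMod p}
    (h : ¬ ConstOn (linMap p d a₀ a) (tailSubspace l)) : ∃ j : Fin d, l ≤ (j : ℕ) ∧ a j ≠ 0 := by
  contrapose! h
  intro x hx y hy
  unfold linMap
  congr 1
  refine sum_congr rfl fun i _ => ?_
  by_cases hi : (i : ℕ) < l
  · rw [hx i hi, hy i hi]
  · rw [h i (by omega), zero_mul, zero_mul]

lemma card_sub_card_filter_le_of_not_isThickAlong {X : Finset (Fin d → ZMod p)} {a₀ : ZMod p}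
    {a : Fin d → ZMod p} {K : ℕ} {δ : ℝ} (h : ¬ IsThickAlong X a₀ a K δ) :
    (X.card : ℝ) - (X.filter fun x => linMap p d a₀ a x ∈ interval p K).card ≤ δ * X.card := by
  rw [IsThickAlong, not_le] at h
  have hsplit : ((X.filter fun x => linMap p d a₀ a x ∈ interval p K).card : ℝ) +
      (X.filter fun x => linMap p d a₀ a x ∉ interval p K).card = X.card := by
    exact_mod_cast card_filter_add_card_filter_not _
  linarith

/-- `ψY ⊆ [-K, K]^l × 𝔽_p^{d-l}`. -/
def IsBoxed (Y : Finset (Fin d → ZMod p)) (ψ : (Fin d → ZMod p) ≃ᵃ[ZMod p] (Fin d → ZMod p))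
    (l K : ℕ) : Prop :=
  ∀ x ∈ Y, ∀ i : Fin d, (i : ℕ) < l → ψ x i ∈ interval p K

variable [Fact p.Prime]

lemma exists_isBoxed_succ_of_not_isThickAlong {Y : Finset (Fin d → ZMod p)}
    {ψ : (Fin d → ZMod p) ≃ᵃ[ZMod p] (Fin d → ZMod p)} {l K K' : ℕ} {δ : ℝ} {a₀ : ZMod p}
    {a : Fin d → ZMod p} (hl : l < d) (hKK' : K ≤ K') (hbox : IsBoxed Y ψ l K)
    (hnc : ¬ ConstOn (linMap p d a₀ a) (tailSubspace l))
    (hnt : ¬ IsThickAlong (Y.image ψ) a₀ a K' δ) :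
    ∃ Y' ⊆ Y, ∃ ψ', (Y.card : ℝ) - Y'.card ≤ δ * Y.card ∧ IsBoxed Y' ψ' (l + 1) K' := by
  obtain ⟨j, hlj, hj⟩ := exists_coeff_ne_zero_of_not_constOn hnc
  obtain ⟨φ, hφl, hφhead⟩ := exists_affineEquiv_apply_eq_linear hl a₀ a hlj hj
  have hloss := card_sub_card_filter_le_of_not_isThickAlong hnt
  rw [filter_image, card_image_of_injective _ ψ.injective,
    card_image_of_injective _ ψ.injective] at hloss
  refine ⟨_, filter_subset _ Y, ψ.trans φ, hloss, fun x hx i hi => ?_⟩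
  rw [mem_filter] at hx
  rcases Nat.lt_succ_iff_lt_or_eq.mp hi with hi | hi
  · rw [AffineEquiv.trans_apply, hφhead _ _ hi]
    exact interval_mono p hKK' (hbox x hx.1 i hi)
  · obtain rfl : i = ⟨l, hl⟩ := Fin.ext hi
    exact (hφl (ψ x)).symm ▸ hx.2

theorem exists_isTubular_subset_of_isBoxed {g : ℕ → ℕ} (hg : ∀ K, K ≤ g K) (K₀ : ℕ) {δ : ℝ}
    (hδ : 0 ≤ δ) (n : ℕ) :
    ∀ l, l + n = d → ∀ (Y : Finset (Fin d → ZMod p)) ψ, IsBoxed Y ψ l (g^[l] K₀) →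
      ∃ l' ≤ d, ∃ Z ⊆ Y, (Y.card : ℝ) - Z.card ≤ n * δ * Y.card ∧
        IsTubular Z (g^[l'] K₀) (g (g^[l'] K₀)) δ := by
  induction n with
  | zero =>
    intro l hl Y ψ hbox
    exact ⟨l, by omega, Y, subset_rfl, by simp, l, by omega, ψ, hbox,
      fun _ _ hnc => (hnc (constOn_tailSubspace_of_le (by omega) _)).elim⟩
  | succ n ih =>
    intro l hl Y ψ hbox
    by_cases hthick : ∀ a₀ a, ¬ ConstOn (linMap p d a₀ a) (tailSubspace l) →
        IsThickAlong (Y.image ψ) a₀ a (g (g^[l] K₀)) δ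
    · exact ⟨l, by omega, Y, subset_rfl, by simp; positivity, l, by omega, ψ, hbox, hthick⟩
    push Not at hthick
    obtain ⟨a₀, a, hnc, hnt⟩ := hthick
    obtain ⟨Y', hY'Y, ψ', hloss, hbox'⟩ :=
      exists_isBoxed_succ_of_not_isThickAlong (by omega) (hg _) hbox hnc hnt
    rw [← Function.iterate_succ_apply' g] at hbox'
    obtain ⟨l', hl', Z, hZY', hlossZ, htub⟩ := ih (l + 1) (by omega) Y' ψ' hbox'
    refine ⟨l', hl', Z, hZY'.trans hY'Y, ?_, htub⟩
    have hY' : (Y'.card : ℝ) ≤ Y.card := by exact_mod_cast card_le_card hY'Y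
    calc (Y.card : ℝ) - Z.card = (Y.card - Y'.card) + (Y'.card - Z.card) := by ring
      _ ≤ δ * Y.card + n * δ * Y.card := by gcongr; exact hlossZ.trans (by gcongr)
      _ = (n + 1 : ℕ) * δ * Y.card := by push_cast; ring

theorem tube_lemma_general (d : ℕ) (g : ℕ → ℕ) (hg : StrictMono g) (K₀ : ℕ)
    (δ : ℝ) (hδ0 : 0 < δ)
    (p : ℕ) (hp : p.Prime)
    (X : Finset (Fin d → ZMod p)) :
    ∃ l ≤ d, ∃ Y ⊆ X,
      (1 - 2 ^ (d + 1) * δ) * (X.card : ℝ) ≤ (Y.card : ℝ) ∧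
      IsTubular Y (g^[l] K₀) (g (g^[l] K₀)) δ := by
  have := Fact.mk hp
  obtain ⟨l, hld, Y, hYX, hloss, htub⟩ :=
    exists_isTubular_subset_of_isBoxed (fun _ => hg.le_apply) K₀ hδ0.le d 0 (zero_add d) X
      (AffineEquiv.refl _ _) fun _ _ _ hi => absurd hi (Nat.not_lt_zero _)
  refine ⟨l, hld, Y, hYX, ?_, htub⟩
  have hd : (d : ℝ) ≤ 2 ^ (d + 1) := by
    exact_mod_cast (Nat.lt_two_pow_self.trans (Nat.pow_lt_pow_right one_lt_two d.lt_succ_self)).le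
  nlinarith [mul_nonneg hδ0.le (Nat.cast_nonneg (α := ℝ) X.card)]

/-- Lemma `tube`: if `0 < δ < 2^{-(d+1)}`, then for any odd prime `p` and any
set `X ⊆ 𝔽_p^d` there are `l ∈ {0,…,d}` and `Y ⊆ X` with `|Y| ≥ (1 - 2^{d+1}δ)|X|` such that
`Y` is `(K, g(K), δ)`-tubular, where `K = g^[l](K₀)`. -/
theorem tube_lemma (d : ℕ) (hd : 1 ≤ d) (g : ℕ → ℕ) (hg : StrictMono g) (K₀ : ℕ)
    (δ : ℝ) (hδ0 : 0 < δ) (hδ1 : δ < ((2 : ℝ) ^ (d + 1))⁻¹)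
    (p : ℕ) (hp : p.Prime) (hodd : Odd p)
    (X : Finset (Fin d → ZMod p)) :
    ∃ l ≤ d, ∃ Y ⊆ X,
      (1 - 2 ^ (d + 1) * δ) * (X.card : ℝ) ≤ (Y.card : ℝ) ∧
      IsTubular Y (g^[l] K₀) (g (g^[l] K₀)) δ :=
  tube_lemma_general d g hg K₀ δ hδ0 p hp X
end

section
/- Let p be an odd prime, d ≥ 1, and let Y ⊆ F_p^d be a finite nonempty set. Let r ≥ 0 be an integer and w: Y → ℕ a function with Σ_{y∈Y} w(y) ≥ d(p-1) + 2r|Y| + 1. Then there exist natural numbers a_y (one for each y ∈ Y), not all zero, such that each a_y lies in {0} ∪ {r, r+1, ..., w(y)-r} and Σ_{y∈Y} a_y·y = 0 in F_p^d. -/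
open Finset Polynomial

variable {F : Type*} [Field F] [DecidableEq F]

lemma key_coeff (S : Finset F) (q : Polynomial F) (hq : q.degree < S.card) :
    ∑ s ∈ S, q.eval s * ∏ t ∈ S.erase s, (s - t)⁻¹ = q.coeff (S.card - 1) := by
  have hinj : Set.InjOn (id : F → F) S := Set.injOn_id _
  have hQ := Lagrange.eq_interpolate hinj hq
  conv_rhs => rw [hQ]
  rw [Lagrange.interpolate_apply, Polynomial.finset_sum_coeff]
  refine Finset.sum_congr rfl fun s hs => ?_
  rw [Polynomial.coeff_C_mul]
  congr 1
  have hnd := Lagrange.natDegree_basis hinj hs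
  have hlc : (Lagrange.basis S id s).coeff (S.card - 1) = (Lagrange.basis S id s).leadingCoeff := by
    rw [Polynomial.leadingCoeff, hnd]
  rw [hlc, Lagrange.basis, Polynomial.leadingCoeff_prod]
  refine Finset.prod_congr rfl fun t ht => ?_
  rw [Lagrange.basisDivisor, Polynomial.leadingCoeff_mul, Polynomial.leadingCoeff_C,
    (Polynomial.monic_X_sub_C _).leadingCoeff, mul_one]
  rfl

lemma key_zero (S : Finset F) {e : ℕ} (he : e < S.card - 1) :
    ∑ s ∈ S, s ^ e * ∏ t ∈ S.erase s, (s - t)⁻¹ = 0 := by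
  have hdeg : (Polynomial.X ^ e : F[X]).degree < S.card := by
    rw [Polynomial.degree_X_pow]
    exact_mod_cast lt_of_lt_of_le he (Nat.sub_le _ _)
  have h := key_coeff S (Polynomial.X ^ e) hdeg
  simp only [Polynomial.eval_pow, Polynomial.eval_X, Polynomial.coeff_X_pow] at h
  rw [h, if_neg (ne_of_gt he)]
lemma davenport {p : ℕ} [Fact p.Prime] (d : ℕ) {σ : Type*} [Fintype σ] [DecidableEq σ]
    (v : σ → Fin d → ZMod p) (A : σ → Finset (ZMod p)) (h0 : ∀ i, (0 : ZMod p) ∈ A i)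
    (hcard : d * (p - 1) < ∑ i, ((A i).card - 1)) :
    ∃ c : σ → ZMod p, (∀ i, c i ∈ A i) ∧ c ≠ 0 ∧ ∀ j, ∑ i, c i * v i j = 0 := by
  have hp2 : 2 ≤ p := (Fact.out : p.Prime).two_le
  have hpne : p - 1 ≠ 0 := by omega
  by_contra hcon
  push_neg at hcon
  set Q : MvPolynomial σ (ZMod p) :=
    ∏ j : Fin d, (1 - (∑ i, MvPolynomial.C (v i j) * MvPolynomial.X i) ^ (p - 1)) with hQdef
  have hevalQ : ∀ c : σ → ZMod p,
      MvPolynomial.eval c Q = ∏ j, (1 - (∑ i, c i * v i j) ^ (p - 1)) := by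
    intro c
    rw [hQdef, map_prod]
    refine Finset.prod_congr rfl fun j _ => ?_
    rw [map_sub, map_one, map_pow, map_sum]
    congr 2
    refine Finset.sum_congr rfl fun i _ => ?_
    simp [mul_comm]
  -- total degree bound
  have hdegQ : Q.totalDegree ≤ d * (p - 1) := by
    rw [hQdef]
    refine le_trans (MvPolynomial.totalDegree_finset_prod _ _) ?_
    have : ∀ j : Fin d,
        (1 - (∑ i, MvPolynomial.C (v i j) * MvPolynomial.X i) ^ (p - 1) :
          MvPolynomial σ (ZMod p)).totalDegree ≤ p - 1 := by
      intro j
      refine le_trans (MvPolynomial.totalDegree_sub _ _) (max_le ?_ ?_)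
      · simp [MvPolynomial.totalDegree_one]
      · refine le_trans (MvPolynomial.totalDegree_pow _ _) ?_
        have : (∑ i, MvPolynomial.C (v i j) * MvPolynomial.X i :
            MvPolynomial σ (ZMod p)).totalDegree ≤ 1 := by
          refine MvPolynomial.totalDegree_finsetSum_le fun i _ => ?_
          refine le_trans (MvPolynomial.totalDegree_mul _ _) ?_
          simp [MvPolynomial.totalDegree_C, MvPolynomial.totalDegree_X]
        calc (p-1) * _ ≤ (p-1) * 1 := Nat.mul_le_mul_left _ this
          _ = p - 1 := mul_one _
    calc ∑ j : Fin d, (1 - (∑ i, MvPolynomial.C (v i j) * MvPolynomial.X i) ^ (p - 1) :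
          MvPolynomial σ (ZMod p)).totalDegree
        ≤ ∑ _j : Fin d, (p - 1) := Finset.sum_le_sum fun j _ => this j
      _ = d * (p - 1) := by simp [Finset.sum_const, mul_comm]
  set W : (σ → ZMod p) → ZMod p :=
    fun c => ∏ i, ∏ t ∈ (A i).erase (c i), (c i - t)⁻¹ with hWdef
  set T : ZMod p := ∑ c ∈ Fintype.piFinset A, MvPolynomial.eval c Q * W c with hTdef
  -- Claim 1 : T = W 0
  have h0grid : (0 : σ → ZMod p) ∈ Fintype.piFinset A :=
    Fintype.mem_piFinset.mpr fun i => h0 i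
  have hT1 : T = W 0 := by
    rw [hTdef]
    rw [Finset.sum_eq_single (0 : σ → ZMod p)]
    · have : MvPolynomial.eval (0 : σ → ZMod p) Q = 1 := by
        rw [hevalQ]
        refine Finset.prod_eq_one fun j _ => ?_
        simp [zero_pow hpne]
      rw [this, one_mul]
    · intro c hc hne
      obtain ⟨j, hj⟩ := hcon c (fun i => Fintype.mem_piFinset.mp hc i) hne
      have hone : (∑ i, c i * v i j) ^ (p - 1) = 1 := ZMod.pow_card_sub_one_eq_one hj
      rw [hevalQ, Finset.prod_eq_zero (Finset.mem_univ j) (by rw [hone, sub_self]), zero_mul]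
    · intro h; exact absurd h0grid h
  have hW0 : W 0 ≠ 0 := by
    rw [hWdef]
    refine Finset.prod_ne_zero_iff.mpr fun i _ => Finset.prod_ne_zero_iff.mpr fun t ht => ?_
    have ht0 : t ≠ 0 := by simpa using (Finset.mem_erase.mp ht).1
    exact inv_ne_zero (by rw [Pi.zero_apply, zero_sub]; exact neg_ne_zero.mpr ht0)
  -- Claim 2 : T = 0
  have hT0 : T = 0 := by
    rw [hTdef]
    have expand : ∀ c ∈ Fintype.piFinset A,
        MvPolynomial.eval c Q * W c
          = ∑ e ∈ Q.support, Q.coeff e * ∏ i, (c i ^ e i * ∏ t ∈ (A i).erase (c i), (c i - t)⁻¹) := by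
      intro c _
      rw [MvPolynomial.eval_eq', Finset.sum_mul]
      refine Finset.sum_congr rfl fun e _ => ?_
      rw [mul_assoc, hWdef, ← Finset.prod_mul_distrib]
    rw [Finset.sum_congr rfl expand, Finset.sum_comm]
    refine Finset.sum_eq_zero fun e he => ?_
    rw [← Finset.mul_sum]
    have hps := Finset.prod_univ_sum A (fun i s => s ^ e i * ∏ t ∈ (A i).erase s, (s - t)⁻¹)
    rw [← hps]
    -- find a coordinate with small exponent
    have hdeg_e : ∑ i, e i ≤ d * (p - 1) := by
      refine le_trans ?_ hdegQ
      have := MvPolynomial.le_totalDegree he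
      rwa [Finsupp.sum_fintype _ _ (fun _ => rfl)] at this
    have hex : ∃ i, e i < (A i).card - 1 := by
      by_contra hall
      push_neg at hall
      have : ∑ i, ((A i).card - 1) ≤ ∑ i, e i := Finset.sum_le_sum fun i _ => hall i
      omega
    obtain ⟨i0, hi0⟩ := hex
    rw [Finset.prod_eq_zero (Finset.mem_univ i0) (key_zero _ hi0), mul_zero]
  exact hW0 (by rw [← hT1, hT0])

/-- Lemma `nul`: let `p` be an odd prime, `d ≥ 1`, `Y ⊆ 𝔽_p^d` finite and
nonempty, `r ≥ 0` and `w : Y → ℕ` with `∑ w(y) ≥ d(p-1) + 2r|Y| + 1`.  Then there are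
natural numbers `a_y`, not all zero, with `a_y ∈ {0} ∪ {r, …, w(y) - r}` for every `y ∈ Y`
and `∑ a_y • y = 0` in `𝔽_p^d`. -/
theorem nul_lemma (p : ℕ) (hp : p.Prime) (hodd : Odd p) (d : ℕ) (hd : 1 ≤ d)
    (Y : Finset (Fin d → ZMod p)) (hY : Y.Nonempty) (r : ℕ)
    (w : (Fin d → ZMod p) → ℕ)
    (hw : d * (p - 1) + 2 * r * Y.card + 1 ≤ ∑ y ∈ Y, w y) :
    ∃ a : (Fin d → ZMod p) → ℕ,
      (∃ y ∈ Y, a y ≠ 0) ∧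
      (∀ y ∈ Y, a y = 0 ∨ (r ≤ a y ∧ a y + r ≤ w y)) ∧
      ∑ y ∈ Y, (a y : ZMod p) • y = 0 := by
  haveI : Fact p.Prime := ⟨hp⟩
  have hp2 : 2 ≤ p := hp.two_le
  by_cases hbig : ∃ y₀ ∈ Y, p + 2 * r ≤ w y₀
  · obtain ⟨y₀, hy₀Y, hy₀⟩ := hbig
    set m : ℕ := p * (r / p + 1) with hm
    have hdm := Nat.div_add_mod r p
    have hmod : r % p < p := Nat.mod_lt _ (by omega)
    have hmval : m = p * (r / p) + p := by rw [hm]; ring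
    refine ⟨fun y => if y = y₀ then m else 0, ⟨y₀, hy₀Y, ?_⟩, ?_, ?_⟩
    · show (if y₀ = y₀ then m else 0) ≠ 0
      rw [if_pos rfl]; omega
    · intro y hy
      by_cases h : y = y₀
      · right
        show r ≤ (if y = y₀ then m else 0) ∧ (if y = y₀ then m else 0) + r ≤ w y
        rw [if_pos h, h]; omega
      · left
        show (if y = y₀ then m else 0) = 0
        rw [if_neg h]
    · refine Finset.sum_eq_zero fun y hy => ?_
      show ((if y = y₀ then m else 0 : ℕ) : ZMod p) • y = 0
      by_cases h : y = y₀
      · rw [if_pos h]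
        have : ((m : ℕ) : ZMod p) = 0 := by
          rw [hm, Nat.cast_mul, ZMod.natCast_self, zero_mul]
        rw [this, zero_smul]
      · rw [if_neg h, Nat.cast_zero, zero_smul]
  · push_neg at hbig
    classical
    set A : (Fin d → ZMod p) → Finset (ZMod p) := fun y =>
      insert 0 (if 2 * r ≤ w y then
        (Finset.range (w y - 2 * r + 1)).image (fun k : ℕ => ((k + r : ℕ) : ZMod p)) else ∅)
      with hA
    have h0A : ∀ y, (0 : ZMod p) ∈ A y := fun y => Finset.mem_insert_self _ _
    have hAcard : ∀ y ∈ Y, w y - 2 * r ≤ (A y).card - 1 := by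
      intro y hy
      by_cases h2r : 2 * r ≤ w y
      · have hwp : w y - 2 * r < p := by have := hbig y hy; omega
        have hinj : Set.InjOn (fun k : ℕ => ((k + r : ℕ) : ZMod p))
            (Finset.range (w y - 2 * r + 1)) := by
          intro k hk k' hk' heq
          simp only [Finset.coe_range, Set.mem_Iio] at hk hk'
          have hkk : (k : ZMod p) = (k' : ZMod p) := by
            push_cast at heq
            exact add_right_cancel heq
          have e1 : ((k : ZMod p)).val = k := ZMod.val_cast_of_lt (by omega)
          have e2 : ((k' : ZMod p)).val = k' := ZMod.val_cast_of_lt (by omega)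
          rw [← e1, ← e2, hkk]
        have hcardim :
            ((Finset.range (w y - 2 * r + 1)).image
              (fun k : ℕ => ((k + r : ℕ) : ZMod p))).card = w y - 2 * r + 1 := by
          rw [Finset.card_image_of_injOn hinj, Finset.card_range]
        have hsub : ((Finset.range (w y - 2 * r + 1)).image
              (fun k : ℕ => ((k + r : ℕ) : ZMod p))) ⊆ A y := by
          rw [hA]; simp only [if_pos h2r]; exact Finset.subset_insert _ _
        have := Finset.card_le_card hsub
        omega
      · omega
    have hsumA : d * (p - 1) < ∑ i : {y // y ∈ Y}, ((A i.1).card - 1) := by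
      have h3 : ∑ y ∈ Y, w y ≤ ∑ y ∈ Y, ((w y - 2 * r) + 2 * r) :=
        Finset.sum_le_sum fun y _ => by omega
      rw [Finset.sum_add_distrib, Finset.sum_const, smul_eq_mul] at h3
      have h4 : ∑ y ∈ Y, (w y - 2 * r) ≤ ∑ y ∈ Y, ((A y).card - 1) :=
        Finset.sum_le_sum hAcard
      have h5 : ∑ i : {y // y ∈ Y}, ((A i.1).card - 1) = ∑ y ∈ Y, ((A y).card - 1) := by
        rw [Finset.univ_eq_attach]
        exact Finset.sum_attach Y (fun y => (A y).card - 1)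
      have h6 : Y.card * (2 * r) = 2 * r * Y.card := Nat.mul_comm _ _
      omega
    obtain ⟨c, hcA, hcne, hcsum⟩ :=
      davenport (p := p) d (fun i : {y // y ∈ Y} => (i.1 : Fin d → ZMod p))
        (fun i => A i.1) (fun i => h0A i.1) hsumA
    set a : (Fin d → ZMod p) → ℕ := fun y =>
      if h : y ∈ Y then
        (if c ⟨y, h⟩ = 0 then 0 else ((c ⟨y, h⟩ - (r : ZMod p)).val + r)) else 0 with ha
    have hacast : ∀ (y) (h : y ∈ Y), ((a y : ℕ) : ZMod p) = c ⟨y, h⟩ := by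
      intro y h
      rw [ha]
      simp only [dif_pos h]
      by_cases hz : c ⟨y, h⟩ = 0
      · rw [if_pos hz, Nat.cast_zero, hz]
      · rw [if_neg hz, Nat.cast_add, ZMod.natCast_val, ZMod.cast_id]
        exact sub_add_cancel _ _
    refine ⟨a, ?_, ?_, ?_⟩
    · have : ∃ i : {y // y ∈ Y}, c i ≠ 0 := by
        by_contra hall
        push_neg at hall
        exact hcne (funext fun i => hall i)
      obtain ⟨i, hi⟩ := this
      refine ⟨i.1, i.2, ?_⟩
      intro h0a
      have := hacast i.1 i.2
      rw [h0a] at this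
      exact hi (by rw [← this, Nat.cast_zero])
    · intro y hy
      rw [ha]
      simp only [dif_pos hy]
      by_cases hz : c ⟨y, hy⟩ = 0
      · left; rw [if_pos hz]
      · right
        rw [if_neg hz]
        have hmem : c ⟨y, hy⟩ ∈ A y := hcA ⟨y, hy⟩
        rw [hA] at hmem
        simp only [Finset.mem_insert] at hmem
        rcases hmem with h0 | hmem
        · exact absurd h0 hz
        · by_cases h2r : 2 * r ≤ w y
          · rw [if_pos h2r] at hmem
            obtain ⟨k, hk, hkeq⟩ := Finset.mem_image.mp hmem
            rw [Finset.mem_range] at hk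
            have hwp : w y - 2 * r < p := by have := hbig y hy; omega
            have hval : (c ⟨y, hy⟩ - (r : ZMod p)).val = k := by
              rw [← hkeq]
              push_cast
              rw [add_sub_cancel_right]
              exact ZMod.val_cast_of_lt (by omega)
            rw [hval]
            omega
          · rw [if_neg h2r] at hmem
            exact absurd hmem (Finset.notMem_empty _)
    · have step1 : ∑ y ∈ Y, ((a y : ℕ) : ZMod p) • y
          = ∑ i ∈ Y.attach, ((a i.1 : ℕ) : ZMod p) • i.1 :=
        (Finset.sum_attach Y (fun y => ((a y : ℕ) : ZMod p) • y)).symm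
      rw [step1]
      have step2 : ∀ i ∈ Y.attach, ((a i.1 : ℕ) : ZMod p) • i.1 = c i • (i.1 : Fin d → ZMod p) := by
        intro i _
        rw [hacast i.1 i.2]
      rw [Finset.sum_congr rfl step2]
      funext j
      rw [Finset.sum_apply]
      have := hcsum j
      rw [← Finset.univ_eq_attach] at *
      simpa [mul_comm] using this
end

section
/- Let p be an odd prime, d ≥ 1, and let n > d(p-1) be an integer. Then any sequence v₁, ..., v_n of (not necessarily distinct) elements of F_p^d contains a nonempty subsequence whose elements sum to zero: there is a nonempty set I ⊆ {1,...,n} with Σ_{i∈I} v_i = 0. -/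
open MvPolynomial Finset

/-- let `p` be an odd prime, `d ≥ 1` and `n > d(p-1)`.  Any sequence
`v₁, …, v_n` of elements of `𝔽_p^d` contains a nonempty subsequence summing to zero. -/
theorem zero_sum_sequence (p : ℕ) (hp : p.Prime) (hodd : Odd p) (d : ℕ) (hd : 1 ≤ d)
    (n : ℕ) (hn : d * (p - 1) < n) (v : Fin n → (Fin d → ZMod p)) :
    ∃ I : Finset (Fin n), I.Nonempty ∧ ∑ i ∈ I, v i = 0 := by
  haveI : Fact p.Prime := ⟨hp⟩
  set f : Fin d → MvPolynomial (Fin n) (ZMod p) :=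
    fun j => ∑ i : Fin n, MvPolynomial.C (v i j) * (MvPolynomial.X i) ^ (p - 1) with hf
  have hdeg : (∑ j : Fin d, (f j).totalDegree) < Fintype.card (Fin n) := by
    rw [Fintype.card_fin]
    refine lt_of_le_of_lt ?_ hn
    calc ∑ j : Fin d, (f j).totalDegree ≤ ∑ j : Fin d, (p - 1) := by
          refine Finset.sum_le_sum fun j _ => ?_
          refine (totalDegree_finset_sum _ _).trans ?_
          refine Finset.sup_le fun i _ => ?_
          refine (totalDegree_mul _ _).trans ?_
          simp [totalDegree_pow]
      _ = d * (p - 1) := by simp [mul_comm]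
  have hdvd := char_dvd_card_solutions_of_fintype_sum_lt p hdeg
  have hp1 : p - 1 ≠ 0 := Nat.sub_ne_zero_of_lt hp.one_lt
  have h0 : ∀ j, eval (fun _ : Fin n => (0 : ZMod p)) (f j) = 0 := by
    intro j
    simp [hf, zero_pow hp1]
  have hcard : 1 < Fintype.card { x : Fin n → ZMod p // ∀ j, eval x (f j) = 0 } := by
    have hpos : 0 < Fintype.card { x : Fin n → ZMod p // ∀ j, eval x (f j) = 0 } :=
      Fintype.card_pos_iff.mpr ⟨⟨_, h0⟩⟩
    have hdvd' : p ∣ Fintype.card { x : Fin n → ZMod p // ∀ j, eval x (f j) = 0 } := by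
      convert hdvd using 2
    have := Nat.le_of_dvd hpos hdvd'
    have := hp.two_le
    omega
  obtain ⟨⟨x, hx⟩, hne⟩ := Fintype.exists_ne_of_one_lt_card hcard ⟨_, h0⟩
  have hxne : x ≠ fun _ => 0 := fun h => hne (by simp [h])
  refine ⟨Finset.univ.filter (fun i => x i ≠ 0), ?_, ?_⟩
  · obtain ⟨i, hi⟩ := Function.ne_iff.mp hxne
    exact ⟨i, by simp [hi]⟩
  · funext j
    rw [Finset.sum_apply]
    have := hx j
    rw [hf] at this
    simp only [map_sum, eval_mul, eval_C, eval_pow, eval_X] at this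
    calc ∑ i ∈ Finset.univ.filter (fun i => x i ≠ 0), v i j
        = ∑ i : Fin n, v i j * x i ^ (p - 1) := by
          rw [Finset.sum_filter]
          refine Finset.sum_congr rfl fun i _ => ?_
          by_cases hxi : x i = 0
          · simp [hxi, zero_pow hp1]
          · simp [hxi, ZMod.pow_card_sub_one_eq_one hxi]
      _ = 0 := by simpa using this
end

section
/- Let d ≥ 1, l ∈ {0,1,...,d}, K' ≥ 1, K ≥ 1 be integers and δ > 0, μ > 0 with μ ≤ 1. Then there exists p₀ = p₀(d,l,K,K',δ,μ) such that the following holds for every prime p > p₀. Let Y ⊆ [-K,K]^l ⊆ F_p^l be nonempty, for each y ∈ Y let X_y ⊆ {y} × F_p^{d-l} be a set with |X_y| ≥ μp, and suppose X = ∪_{y∈Y} X_y is (K',δ)-thick along every linear function not constant on {0} × F_p^{d-l}. Then there exist subsets Z_y ⊆ X_y (y ∈ Y) such that μ|X_y|/20 ≤ |Z_y| ≤ μ|X_y|/10 for every y ∈ Y, and the set Z = ∪_{y∈Y} Z_y is (K', δ/4)-thick along every linear function that is not constant on {0} × F_p^{d-l}. -/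
/-!
Colour the points of `(ZMod p)^d` with `N ≈ 14/μ` colours and let `Z_y` be the points of `X_y`
of colour `0`, so that a uniformly random colouring keeps each point with probability
`q = 1/N ∈ [μ/15, μ/14]`. Counting colourings against the moment generating function of a
centred Bernoulli variable (a Chernoff bound) shows that all but a fraction `2 exp(-q|B|/64)` of
the colourings keep `q|B|` points of a fixed set `B` up to a relative error `1/4`. There are at
most `p^d` fibres `X_y`, each of size at least `μp`, and at most `p^(d+1)` sets `X \ H(ξ, K')`
along thick directions `ξ`, each of size at least `δ|X| ≥ δμp`; for large `p` a union bound
leaves a colouring balanced on all of them. Balance on the fibres gives the bounds on `|Z_y|`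
and `|Z| ≤ (5/4) q |X|`, while along a thick `ξ` we get
`|Z \ H(ξ, K')| ≥ (3/4) q |X \ H(ξ, K')| ≥ (3/4) q δ |X| ≥ (δ/4) |Z|`.
-/

open Finset

open Real Filter Topology

lemma Real.exp_le_one_add_add_sq {u : ℝ} (hu : |u| ≤ 1) : exp u ≤ 1 + u + u ^ 2 := by
  linarith [(abs_le.mp (Real.abs_exp_sub_one_sub_id_le hu)).2]

lemma Real.bernoulli_mgf_le {q s : ℝ} (hq0 : 0 ≤ q) (hq1 : q ≤ 1) (hs : |s| ≤ 1) :
    q * exp (s * (1 - q)) + (1 - q) * exp (-(s * q)) ≤ exp (s ^ 2 * q) := by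
  have h₁ := exp_le_one_add_add_sq (u := s * (1 - q)) (by
    rw [abs_mul, abs_of_nonneg (by linarith : 0 ≤ 1 - q)]; nlinarith [abs_nonneg s])
  have h₂ := exp_le_one_add_add_sq (u := -(s * q)) (by
    rw [abs_neg, abs_mul, abs_of_nonneg hq0]; nlinarith [abs_nonneg s])
  calc q * exp (s * (1 - q)) + (1 - q) * exp (-(s * q))
      ≤ q * (1 + s * (1 - q) + (s * (1 - q)) ^ 2)
          + (1 - q) * (1 + -(s * q) + (-(s * q)) ^ 2) := by
        gcongr
    _ = 1 + s ^ 2 * q * (1 - q) := by ring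
    _ ≤ 1 + s ^ 2 * q := by nlinarith [sq_nonneg s]
    _ ≤ exp (s ^ 2 * q) := by linarith [add_one_le_exp (s ^ 2 * q)]

lemma card_filter_le_exp_neg_mul_sum_exp {Ω : Type*} [Fintype Ω] (f : Ω → ℝ) (t : ℝ) :
    (#{ω | t ≤ f ω} : ℝ) ≤ exp (-t) * ∑ ω, exp (f ω) := by
  classical
  rw [mul_sum, card_eq_sum_ones, Nat.cast_sum, Nat.cast_one]
  refine (sum_le_sum fun ω hω => ?_).trans (sum_le_sum_of_subset_of_nonneg (subset_univ _)
    fun ω _ _ => by positivity)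
  rw [← exp_add, one_le_exp_iff]
  linarith [(mem_filter.mp hω).2]

section Colouring

variable {V C : Type*} [Fintype C] [DecidableEq C]

/-- `#S / Fintype.card C * #B` is the expected number of points of `B` receiving a colour in `S`
under a uniformly random colouring. -/
def IsBalanced (ω : V → C) (S : Finset C) (η : ℝ) (B : Finset V) : Prop :=
  |(#{x ∈ B | ω x ∈ S} : ℝ) - #S / Fintype.card C * #B| ≤ η * (#S / Fintype.card C * #B)

noncomputable instance (ω : V → C) (S : Finset C) (η : ℝ) (B : Finset V) :
    Decidable (IsBalanced ω S η B) := by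
  unfold IsBalanced; infer_instance

variable {ω : V → C} {S : Finset C} {η : ℝ} {B : Finset V}

lemma IsBalanced.le_card (h : IsBalanced ω S η B) :
    (1 - η) * (#S / Fintype.card C * #B) ≤ #{x ∈ B | ω x ∈ S} := by
  linarith [(abs_le.mp h).1]

lemma IsBalanced.card_le (h : IsBalanced ω S η B) :
    (#{x ∈ B | ω x ∈ S} : ℝ) ≤ (1 + η) * (#S / Fintype.card C * #B) := by
  linarith [(abs_le.mp h).2]

lemma IsBalanced.card_mem_Icc {μ : ℝ} (h : IsBalanced ω S (1 / 4) B)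
    (hq : (#S : ℝ) / Fintype.card C ∈ Set.Icc (μ / 15) (μ / 14)) :
    (#{x ∈ B | ω x ∈ S} : ℝ) ∈ Set.Icc (μ * #B / 20) (μ * #B / 10) := by
  have hlo := mul_le_mul_of_nonneg_right hq.1 (#B).cast_nonneg
  have hhi := mul_le_mul_of_nonneg_right hq.2 (#B).cast_nonneg
  constructor <;> linarith [h.le_card, h.card_le]

lemma IsBalanced.biUnion [DecidableEq V] {ι : Type*} {s : Finset ι} {X : ι → Finset V}
    (hX : (s : Set ι).PairwiseDisjoint X)
    (h : ∀ i ∈ s, IsBalanced ω S η (X i)) : IsBalanced ω S η (s.biUnion X) := by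
  unfold IsBalanced at h ⊢
  rw [filter_biUnion, card_biUnion hX, card_biUnion (hX.mono fun i => filter_subset _ _)]
  push_cast
  rw [mul_sum, mul_sum, ← sum_sub_distrib]
  exact (abs_sum_le_sum_abs _ _).trans (sum_le_sum h)

lemma sum_exp_mul_indicator_sub_le (S : Finset C) {s : ℝ} (hs : |s| ≤ 1) :
    ∑ c, exp (s * ((if c ∈ S then 1 else 0) - #S / Fintype.card C))
      ≤ Fintype.card C * exp (s ^ 2 * (#S / Fintype.card C)) := by
  set q : ℝ := #S / Fintype.card C
  rcases (Fintype.card C).eq_zero_or_pos with hC | hC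
  · simp [Fintype.card_eq_zero_iff.mp hC]
  have hS : (#S : ℝ) = Fintype.card C * q := (mul_div_cancel₀ _ (by positivity)).symm
  have hSC : (#S : ℝ) ≤ Fintype.card C := by exact_mod_cast card_le_univ S
  have hq1 : q ≤ 1 := div_le_one_of_le₀ hSC (by positivity)
  have hmgf := bernoulli_mgf_le (div_nonneg (#S).cast_nonneg (Fintype.card C).cast_nonneg) hq1 hs
  have hin : ∀ c ∈ S, exp (s * ((if c ∈ S then 1 else 0) - q)) = exp (s * (1 - q)) :=
    fun c hc => by rw [if_pos hc]
  have hout : ∀ c ∈ Sᶜ, exp (s * ((if c ∈ S then 1 else 0) - q)) = exp (-(s * q)) :=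
    fun c hc => by rw [if_neg (mem_compl.mp hc), zero_sub, mul_neg]
  rw [← sum_add_sum_compl S, sum_congr rfl hin, sum_congr rfl hout, sum_const, sum_const,
    card_compl, nsmul_eq_mul, nsmul_eq_mul, Nat.cast_sub (card_le_univ S), hS]
  calc _ = Fintype.card C * (q * exp (s * (1 - q)) + (1 - q) * exp (-(s * q))) := by ring
    _ ≤ _ := by gcongr

variable [Fintype V] [DecidableEq V]

lemma sum_exp_mul_card_filter_sub_le (B : Finset V) (S : Finset C) {s : ℝ} (hs : |s| ≤ 1) :
    ∑ ω : V → C, exp (s * (#{x ∈ B | ω x ∈ S} - #S / Fintype.card C * #B))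
      ≤ Fintype.card C ^ Fintype.card V * exp (s ^ 2 * (#S / Fintype.card C) * #B) := by
  set q : ℝ := #S / Fintype.card C
  let g (x : V) (c : C) : ℝ := if x ∈ B then exp (s * ((if c ∈ S then 1 else 0) - q)) else 1
  have hprod (ω : V → C) : exp (s * (#{x ∈ B | ω x ∈ S} - q * #B)) = ∏ x, g x (ω x) := by
    rw [prod_ite_mem, univ_inter, ← exp_sum, ← mul_sum, sum_sub_distrib, sum_boole, sum_const,
      nsmul_eq_mul, mul_comm q]
  have hfactor (x : V) :
      ∑ c, g x c ≤ Fintype.card C * exp (s ^ 2 * q * if x ∈ B then 1 else 0) := by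
    by_cases hx : x ∈ B
    · simpa [g, hx] using sum_exp_mul_indicator_sub_le S hs
    · simp [g, hx]
  calc ∑ ω : V → C, exp (s * (#{x ∈ B | ω x ∈ S} - q * #B))
      = ∏ x, ∑ c, g x c := by simp only [hprod, Fintype.prod_sum]
    _ ≤ ∏ x, (Fintype.card C * exp (s ^ 2 * q * if x ∈ B then 1 else 0)) :=
        prod_le_prod (fun x _ => sum_nonneg fun c _ => by positivity) fun x _ => hfactor x
    _ = Fintype.card C ^ Fintype.card V * exp (s ^ 2 * q * #B) := by
        rw [prod_mul_distrib, prod_const, card_univ, ← exp_sum, ← mul_sum, sum_boole,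
          filter_mem_eq_inter, univ_inter]

lemma card_not_isBalanced_le (B : Finset V) (S : Finset C) {η : ℝ} (hη0 : 0 ≤ η)
    (hη2 : η ≤ 2) :
    (#{ω : V → C | ¬ IsBalanced ω S η B} : ℝ) ≤
      2 * Fintype.card C ^ Fintype.card V * exp (-(η ^ 2 * (#S / Fintype.card C) * #B / 4)) := by
  set q : ℝ := #S / Fintype.card C
  set D : (V → C) → ℝ := fun ω => #{x ∈ B | ω x ∈ S} - q * #B
  -- Markov's inequality for `exp (s * D)` with `s = ±η/2`; an unbalanced colouring has
  -- `t ≤ s * D` for one of the two signs.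
  set t := η / 2 * (η * (q * #B)) with ht
  have htail {s : ℝ} (hs : |s| = η / 2) :
      (#{ω | t ≤ s * D ω} : ℝ) ≤
        Fintype.card C ^ Fintype.card V * exp (-(η ^ 2 * q * #B / 4)) := by
    calc (#{ω | t ≤ s * D ω} : ℝ) ≤ exp (-t) * ∑ ω, exp (s * D ω) :=
          card_filter_le_exp_neg_mul_sum_exp _ t
      _ ≤ exp (-t) * (Fintype.card C ^ Fintype.card V * exp (s ^ 2 * q * #B)) := by
          gcongr; exact sum_exp_mul_card_filter_sub_le B S (by linarith)
      _ = _ := by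
          rw [← sq_abs, hs, mul_left_comm, ← exp_add, ht]; ring_nf
  have hsplit : ({ω | ¬ IsBalanced ω S η B} : Finset (V → C)) ⊆
      ({ω | t ≤ η / 2 * D ω} : Finset _) ∪ ({ω | t ≤ -(η / 2) * D ω} : Finset _) := by
    intro ω hω
    simp only [IsBalanced, not_le, mem_union, mem_filter, mem_univ, true_and] at hω ⊢
    rcases le_abs'.mp hω.le with h | h
    · right
      rw [neg_mul, ← mul_neg]
      exact mul_le_mul_of_nonneg_left (le_neg_of_le_neg h) (by linarith)
    · exact Or.inl (mul_le_mul_of_nonneg_left h (by linarith))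
  calc (#{ω | ¬ IsBalanced ω S η B} : ℝ)
      ≤ #({ω | t ≤ η / 2 * D ω} : Finset _) +
          #({ω | t ≤ -(η / 2) * D ω} : Finset _) := by
        exact_mod_cast (card_le_card hsplit).trans (card_union_le _ _)
    _ ≤ _ := by
        linarith [htail (s := η / 2) (abs_of_nonneg (by linarith)),
          htail (s := -(η / 2)) (by rw [abs_neg, abs_of_nonneg (by linarith)])]

lemma exists_forall_isBalanced [Nonempty C] {ι : Type*} [Fintype ι] (B : ι → Finset V)
    (S : Finset C) {η L : ℝ} (hη0 : 0 ≤ η) (hη2 : η ≤ 2)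
    (hsmall : 2 * Fintype.card ι * exp (-(η ^ 2 * (#S / Fintype.card C) * L / 4)) < 1) :
    ∃ ω : V → C, ∀ i, L ≤ #(B i) → IsBalanced ω S η (B i) := by
  set M : ℝ := Fintype.card C ^ Fintype.card V
  let bad (i : ι) : Finset (V → C) := {ω | ¬ IsBalanced ω S η (B i)}
  by_contra! hbad
  have hcover : (univ : Finset (V → C)) ⊆ ({i | L ≤ #(B i)} : Finset ι).biUnion bad :=
    fun ω _ => by
      obtain ⟨i, hi, hω⟩ := hbad ω
      simpa [bad] using ⟨i, hi, hω⟩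
  have hbound (i) (hi : i ∈ ({i | L ≤ #(B i)} : Finset ι)) :
      (#(bad i) : ℝ) ≤ 2 * M * exp (-(η ^ 2 * (#S / Fintype.card C) * L / 4)) := by
    refine (card_not_isBalanced_le (B i) S hη0 hη2).trans ?_
    gcongr
    exact (mem_filter.mp hi).2
  have hM : 0 < M := by positivity
  refine lt_irrefl M ?_
  calc M = #(univ : Finset (V → C)) := by simp [M]
    _ ≤ ∑ i ∈ {i | L ≤ #(B i)}, (#(bad i) : ℝ) := by
        exact_mod_cast (card_le_card hcover).trans card_biUnion_le
    _ ≤ Fintype.card ι * (2 * M * exp (-(η ^ 2 * (#S / Fintype.card C) * L / 4))) := by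
        refine (sum_le_sum hbound).trans ?_
        rw [sum_const, nsmul_eq_mul]
        gcongr
        exact_mod_cast card_le_univ _
    _ < M := by nlinarith

end Colouring

lemma exists_nat_forall_two_mul_pow_add_pow_mul_exp_neg_lt_one (k : ℕ) {c : ℝ} (hc : 0 < c) :
    ∃ n₀ : ℕ, ∀ n : ℕ, n₀ < n →
      2 * ((n : ℝ) ^ k + n ^ (k + 1)) * exp (-c * n) < 1 := by
  have hlim (j : ℕ) :
      Tendsto (fun n : ℕ => (n : ℝ) ^ (j : ℝ) * exp (-c * n)) atTop (𝓝 0) :=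
    (tendsto_rpow_mul_exp_neg_mul_atTop_nhds_zero j c hc).comp tendsto_natCast_atTop_atTop
  have hsum := ((hlim k).add (hlim (k + 1))).const_mul 2
  rw [add_zero, mul_zero] at hsum
  obtain ⟨n₀, h⟩ := eventually_atTop.mp (hsum.eventually_lt_const one_pos)
  refine ⟨n₀, fun n hn => ?_⟩
  simpa only [Real.rpow_natCast, add_mul, mul_assoc] using h n hn.le

lemma exists_nat_one_div_mem_Icc {μ : ℝ} (hμ0 : 0 < μ) (hμ1 : μ ≤ 1) :
    ∃ N : ℕ, 0 < N ∧ 1 / (N : ℝ) ∈ Set.Icc (μ / 15) (μ / 14) := by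
  have hle : 14 / μ ≤ ⌈14 / μ⌉₊ := Nat.le_ceil _
  have hlt : (⌈14 / μ⌉₊ : ℝ) < 14 / μ + 1 := Nat.ceil_lt_add_one (by positivity)
  have hpos : (0 : ℝ) < ⌈14 / μ⌉₊ := (by positivity : (0 : ℝ) < 14 / μ).trans_le hle
  refine ⟨⌈14 / μ⌉₊, by exact_mod_cast hpos, ?_, ?_⟩
  · have := mul_lt_mul_of_pos_left hlt hμ0
    rw [mul_add, mul_div_cancel₀ _ hμ0.ne', mul_one] at this
    rw [div_le_div_iff₀ (by norm_num) hpos]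
    linarith
  · rw [div_le_div_iff₀ hpos (by norm_num), one_mul]
    rwa [div_le_iff₀ hμ0, mul_comm] at hle

lemma pairwiseDisjoint_of_forall_eq_of_forall_eq_zero {M : Type*} [Zero M] {d l : ℕ}
    {Y : Finset (Fin d → M)} {X : (Fin d → M) → Finset (Fin d → M)}
    (hY : ∀ y ∈ Y, ∀ i : Fin d, l ≤ (i : ℕ) → y i = 0)
    (hX : ∀ y ∈ Y, ∀ x ∈ X y, ∀ i : Fin d, (i : ℕ) < l → x i = y i) :
    (Y : Set (Fin d → M)).PairwiseDisjoint X := by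
  intro y hy y' hy' hne
  refine disjoint_left.mpr fun x hx hx' => hne (funext fun i => ?_)
  rcases lt_or_ge (i : ℕ) l with hi | hi
  · rw [← hX y hy x hx i hi, hX y' hy' x hx' i hi]
  · rw [hY y hy i hi, hY y' hy' i hi]

lemma IsThickAlong.filter_of_isBalanced {p d K : ℕ} {C : Type*} [Fintype C] [DecidableEq C]
    {X : Finset (Fin d → ZMod p)} {a₀ : ZMod p} {a : Fin d → ZMod p} {δ : ℝ}
    {ω : (Fin d → ZMod p) → C} {S : Finset C} (hX : IsThickAlong X a₀ a K δ)
    (hδ : 0 ≤ δ)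
    (hbal : IsBalanced ω S (1 / 4) X)
    (hout : IsBalanced ω S (1 / 4) {x ∈ X | linMap p d a₀ a x ∉ interval p K}) :
    IsThickAlong {x ∈ X | ω x ∈ S} a₀ a K (δ / 4) := by
  unfold IsThickAlong at hX ⊢
  rw [filter_comm]
  have hq : 0 ≤ (#S : ℝ) / Fintype.card C := by positivity
  nlinarith [hbal.card_le, hout.le_card, mul_le_mul_of_nonneg_left hX hq]

theorem sub_proposition_general (d l K K' : ℕ) (δ μ : ℝ) (hδ : 0 < δ) (hμ0 : 0 < μ)
    (hμ1 : μ ≤ 1) :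
    ∃ p₀ : ℕ, ∀ p : ℕ, p.Prime → p₀ < p →
      ∀ Y : Finset (Fin d → ZMod p), Y.Nonempty →
        (∀ y ∈ Y, (∀ i : Fin d, (i : ℕ) < l → y i ∈ interval p K) ∧
                  (∀ i : Fin d, l ≤ (i : ℕ) → y i = 0)) →
        ∀ Xf : (Fin d → ZMod p) → Finset (Fin d → ZMod p),
          (∀ y ∈ Y, (∀ x ∈ Xf y, ∀ i : Fin d, (i : ℕ) < l → x i = y i) ∧
                    μ * (p : ℝ) ≤ ((Xf y).card : ℝ)) →
          (∀ (a₀ : ZMod p) (a : Fin d → ZMod p),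
            ¬ ConstOn (linMap p d a₀ a)
                {x : Fin d → ZMod p | ∀ i : Fin d, (i : ℕ) < l → x i = 0} →
            IsThickAlong (Y.biUnion Xf) a₀ a K' δ) →
          ∃ Zf : (Fin d → ZMod p) → Finset (Fin d → ZMod p),
            (∀ y ∈ Y, Zf y ⊆ Xf y ∧
              μ * ((Xf y).card : ℝ) / 20 ≤ ((Zf y).card : ℝ) ∧
              ((Zf y).card : ℝ) ≤ μ * ((Xf y).card : ℝ) / 10) ∧
            ∀ (a₀ : ZMod p) (a : Fin d → ZMod p),
              ¬ ConstOn (linMap p d a₀ a)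
                  {x : Fin d → ZMod p | ∀ i : Fin d, (i : ℕ) < l → x i = 0} →
              IsThickAlong (Y.biUnion Zf) a₀ a K' (δ / 4) := by
  classical
  obtain ⟨N, hN, hNμ⟩ := exists_nat_one_div_mem_Icc hμ0 hμ1
  have : NeZero N := ⟨hN.ne'⟩
  have hq : (#({0} : Finset (Fin N)) : ℝ) / Fintype.card (Fin N) = 1 / N := by simp
  -- `κ p` is the Chernoff exponent `(1/4)^2 (1/N) L / 4` for the common lower bound
  -- `L = min 1 δ * μ p` on the sizes of the fibres and of the sets `X \ H(ξ, K')`, `ξ` thick.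
  set κ := min 1 δ * μ / (64 * N)
  obtain ⟨p₀, hp₀⟩ := exists_nat_forall_two_mul_pow_add_pow_mul_exp_neg_lt_one d (c := κ)
    (div_pos (mul_pos (lt_min one_pos hδ) hμ0) (by positivity))
  refine ⟨p₀, fun p hp hpp₀ Y hYne hY Xf hXf hthick => ?_⟩
  have : NeZero p := ⟨hp.ne_zero⟩
  set X := Y.biUnion Xf
  set L := min 1 δ * (μ * p)
  obtain ⟨ω, hω⟩ := exists_forall_isBalanced
    (Sum.elim Xf fun P : ZMod p × (Fin d → ZMod p) =>
      {x ∈ X | linMap p d P.1 P.2 x ∉ interval p K'})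
    ({0} : Finset (Fin N)) (η := 1 / 4) (L := L) (by norm_num) (by norm_num) (by
      convert hp₀ p hpp₀ using 3
      · simp [pow_succ, mul_comm]
      · simp only [κ, L, hq]; ring)
  have hfib (y) (hy : y ∈ Y) : IsBalanced ω {0} (1 / 4) (Xf y) :=
    hω (.inl y) ((mul_le_of_le_one_left (by positivity) (min_le_left _ _)).trans (hXf y hy).2)
  have hX : μ * p ≤ #X := by
    obtain ⟨y, hy⟩ := hYne
    exact (hXf y hy).2.trans (by exact_mod_cast card_le_card (subset_biUnion_of_mem Xf hy))
  have hXbal : IsBalanced ω {0} (1 / 4) X := IsBalanced.biUnion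
    (pairwiseDisjoint_of_forall_eq_of_forall_eq_zero (fun y hy => (hY y hy).2)
      fun y hy => (hXf y hy).1) hfib
  refine ⟨fun y => {x ∈ Xf y | ω x ∈ ({0} : Finset (Fin N))},
    fun y hy => ⟨filter_subset _ _, (hfib y hy).card_mem_Icc (by rwa [hq])⟩,
    fun a₀ a hnc => ?_⟩
  have hXa := hthick a₀ a hnc
  rw [← filter_biUnion]
  exact hXa.filter_of_isBalanced hδ.le hXbal (hω (.inr (a₀, a))
    ((mul_le_mul_of_nonneg_right (min_le_right _ _) (by positivity)).trans
      ((mul_le_mul_of_nonneg_left hX hδ.le).trans hXa)))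

/-- Proposition `sub`: with `𝔽_p^d` identified with `𝔽_p^l × 𝔽_p^{d-l}`
(elements of `𝔽_p^l` encoded as vectors vanishing on the last `d - l` coordinates): for
`d ≥ 1`, `l ∈ {0,…,d}`, `K, K' ≥ 1`, `δ > 0` and `0 < μ ≤ 1` there is `p₀` such that for
every prime `p > p₀`: for every nonempty `Y ⊆ [-K,K]^l` and sets `X_y ⊆ {y} × 𝔽_p^{d-l}`
with `|X_y| ≥ μp`, if `X = ⋃_y X_y` is `(K', δ)`-thick along every linear function not
constant on `{0} × 𝔽_p^{d-l}`, then there are subsets `Z_y ⊆ X_y` with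
`μ|X_y|/20 ≤ |Z_y| ≤ μ|X_y|/10` for all `y ∈ Y` such that `Z = ⋃_y Z_y` is
`(K', δ/4)`-thick along every linear function not constant on `{0} × 𝔽_p^{d-l}`. -/
theorem sub_proposition (d l K K' : ℕ) (hd : 1 ≤ d) (hl : l ≤ d) (hK : 1 ≤ K)
    (hK' : 1 ≤ K') (δ μ : ℝ) (hδ : 0 < δ) (hμ0 : 0 < μ) (hμ1 : μ ≤ 1) :
    ∃ p₀ : ℕ, ∀ p : ℕ, p.Prime → p₀ < p →
      ∀ Y : Finset (Fin d → ZMod p), Y.Nonempty →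
        (∀ y ∈ Y, (∀ i : Fin d, (i : ℕ) < l → y i ∈ interval p K) ∧
                  (∀ i : Fin d, l ≤ (i : ℕ) → y i = 0)) →
        ∀ Xf : (Fin d → ZMod p) → Finset (Fin d → ZMod p),
          (∀ y ∈ Y, (∀ x ∈ Xf y, ∀ i : Fin d, (i : ℕ) < l → x i = y i) ∧
                    μ * (p : ℝ) ≤ ((Xf y).card : ℝ)) →
          (∀ (a₀ : ZMod p) (a : Fin d → ZMod p),
            ¬ ConstOn (linMap p d a₀ a)
                {x : Fin d → ZMod p | ∀ i : Fin d, (i : ℕ) < l → x i = 0} →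
            IsThickAlong (Y.biUnion Xf) a₀ a K' δ) →
          ∃ Zf : (Fin d → ZMod p) → Finset (Fin d → ZMod p),
            (∀ y ∈ Y, Zf y ⊆ Xf y ∧
              μ * ((Xf y).card : ℝ) / 20 ≤ ((Zf y).card : ℝ) ∧
              ((Zf y).card : ℝ) ≤ μ * ((Xf y).card : ℝ) / 10) ∧
            ∀ (a₀ : ZMod p) (a : Fin d → ZMod p),
              ¬ ConstOn (linMap p d a₀ a)
                  {x : Fin d → ZMod p | ∀ i : Fin d, (i : ℕ) < l → x i = 0} →
              IsThickAlong (Y.biUnion Zf) a₀ a K' (δ / 4) :=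
  sub_proposition_general d l K K' δ μ hδ hμ0 hμ1
end

section
/- For every d ≥ 2 and every m ≥ 1 there exists p₀ = p₀(d,m) such that for every prime p > p₀ and any affine subspaces U₁, ..., U_m of F_p^d, each of dimension at least 1, there exists a linear hyperplane H of F_p^d (a (d-1)-dimensional subspace passing through the origin) which intersects every U_i. -/
/-!
A functional `φ` is constant on an affine subspace `U` exactly when it lies in the annihilator
of the direction of `U`; otherwise `φ` takes every value on `U`, so `ker φ` meets `U`. When
every `Uᵢ` has positive dimension these annihilators are proper subspaces of the dual, and
fewer than `|K|` proper subspaces cannot cover a vector space over `K`. Hence for `p > m`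
some nonzero `φ` avoids all of them, and `H = ker φ` is the required hyperplane.
-/

open Module

theorem AffineSubspace.exists_mem_ker_of_notMem_dualAnnihilator {K V : Type*} [Field K]
    [AddCommGroup V] [Module K V] {s : AffineSubspace K V} (hs : (s : Set V).Nonempty)
    {φ : Dual K V} (hφ : φ ∉ s.direction.dualAnnihilator) : ∃ x ∈ s, φ x = 0 := by
  obtain ⟨v, hv, hφv⟩ : ∃ v ∈ s.direction, φ v ≠ 0 := by
    simpa [Submodule.mem_dualAnnihilator] using hφ
  obtain ⟨a, ha⟩ := hs
  refine ⟨(-(φ a) / φ v) • v +ᵥ a, vadd_mem_of_mem_direction (s.direction.smul_mem _ hv) ha, ?_⟩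
  simp [vadd_eq_add, hφv]

theorem exists_hyperplane_forall_exists_mem_of_card_lt {K V ι : Type*} [Field K]
    [AddCommGroup V] [Module K V] [FiniteDimensional K V] [Fintype ι] [Nonempty ι]
    (U : ι → AffineSubspace K V) (hne : ∀ i, (U i : Set V).Nonempty)
    (hdir : ∀ i, (U i).direction ≠ ⊥) (hcard : Fintype.card ι < ENat.card K) :
    ∃ H : Submodule K V, finrank K H + 1 = finrank K V ∧ ∀ i, ∃ x ∈ U i, x ∈ H := by
  classical
  obtain ⟨φ, hφ⟩ : ∃ φ : Dual K V, ∀ i, φ ∉ (U i).direction.dualAnnihilator := by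
    have := (Submodule.iUnion_ssubset_of_forall_ne_top_of_card_lt Finset.univ
      (fun i ↦ (U i).direction.dualAnnihilator) (fun i ↦ by simpa using hdir i)
      (by simpa using hcard)).ne
    simpa [Set.eq_univ_iff_forall] using this
  have hφ0 : φ ≠ 0 := fun h ↦ hφ (Classical.arbitrary ι) (h ▸ Submodule.zero_mem _)
  exact ⟨LinearMap.ker φ, Dual.finrank_ker_add_one_of_ne_zero hφ0,
    fun i ↦ AffineSubspace.exists_mem_ker_of_notMem_dualAnnihilator (hne i) (hφ i)⟩

theorem generic_hyperplane_general (d m : ℕ) (hm : 1 ≤ m) :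
    ∃ p₀ : ℕ, ∀ p : ℕ, p.Prime → p₀ < p →
      ∀ U : Fin m → AffineSubspace (ZMod p) (Fin d → ZMod p),
        (∀ i, (U i : Set (Fin d → ZMod p)).Nonempty) →
        (∀ i, 1 ≤ Module.finrank (ZMod p) (U i).direction) →
        ∃ H : Submodule (ZMod p) (Fin d → ZMod p),
          Module.finrank (ZMod p) H = d - 1 ∧
          ∀ i, ∃ x, x ∈ U i ∧ x ∈ H := by
  refine ⟨m, fun p hp hmp U hne hdim ↦ ?_⟩
  have : Fact p.Prime := ⟨hp⟩
  have : Nonempty (Fin m) := ⟨⟨0, hm⟩⟩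
  have hdir : ∀ i, (U i).direction ≠ ⊥ := fun i h ↦ by simpa [h] using hdim i
  have hcard : Fintype.card (Fin m) < ENat.card (ZMod p) := by
    simpa [ENat.card_eq_coe_fintype_card] using hmp
  obtain ⟨H, hH, hmeet⟩ := exists_hyperplane_forall_exists_mem_of_card_lt U hne hdir hcard
  refine ⟨H, ?_, fun i ↦ by simpa using hmeet i⟩
  simp only [finrank_fin_fun] at hH
  omega

/-- for every `d ≥ 2` and `m ≥ 1` there is `p₀ = p₀(d, m)` such that for
every prime `p > p₀` and any affine subspaces `U₁, …, U_m` of `𝔽_p^d` of dimension at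
least `1` (i.e. nonempty with direction of rank at least `1`), there exists a linear
hyperplane `H` (a `(d-1)`-dimensional subspace through the origin) intersecting every
`U_i`. -/
theorem generic_hyperplane (d m : ℕ) (hd : 2 ≤ d) (hm : 1 ≤ m) :
    ∃ p₀ : ℕ, ∀ p : ℕ, p.Prime → p₀ < p →
      ∀ U : Fin m → AffineSubspace (ZMod p) (Fin d → ZMod p),
        (∀ i, (U i : Set (Fin d → ZMod p)).Nonempty) →
        (∀ i, 1 ≤ Module.finrank (ZMod p) (U i).direction) →
        ∃ H : Submodule (ZMod p) (Fin d → ZMod p),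
          Module.finrank (ZMod p) H = d - 1 ∧
          ∀ i, ∃ x, x ∈ U i ∧ x ∈ H :=
  generic_hyperplane_general d m hm
end
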